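/- arXiv:0707.1999 — 2 statements merged into one kernel-verified Lean document; each statement's English description precedes it below -/
import Mathlib

section
/- Let M be a proper metric space and (B_i) an increasing sequence of compact subsets with B_0 = ∅, such that every point of M lies in some B_i, and dist(M \ B_{i+1}, B_i) ≥ 1 for all i. Define φ : M → ℝ by φ(x) = i + min(dist(x, B_i), 1) where i is the largest index with x ∉ B_i (and φ(x)=i+1 if x ∈ B_{i+1} with dist(x,B_i) ≥ 1). Then φ is a proper map. -/
/-- Given an exhaustion of a proper metric space `M` by compact sets `B_i` with
`B_0 = ∅` and `dist(M \ B_{i+1}, B_i) ≥ 1`, the function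
`φ(x) = i + min(dist(x, B_i), 1)` (where `i` is the largest index with `x ∉ B_i`,
i.e. `x ∈ B_{i+1} \ B_i`) is a proper map `M → ℝ`: preimages of bounded sets are
bounded. -/
theorem balloon_phi_proper {M : Type*} [MetricSpace M] [ProperSpace M]
    (B : ℕ → Set M) (hB0 : B 0 = ∅) (hcpt : ∀ i, IsCompact (B i))
    (hmono : ∀ i, B i ⊆ B (i + 1)) (hexh : ∀ x : M, ∃ i, x ∈ B i)
    (hdist : ∀ i, ∀ x ∉ B (i + 1), ∀ y ∈ B i, 1 ≤ dist x y)
    (φ : M → ℝ)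
    (hφ : ∀ (i : ℕ) (x : M), x ∈ B (i + 1) → x ∉ B i →
      φ x = i + min (Metric.infDist x (B i)) 1) :
    ∀ s : Set ℝ, Bornology.IsBounded s → Bornology.IsBounded (φ ⁻¹' s) := by
  intro s hs
  obtain ⟨C, hC⟩ := hs.subset_closedBall 0
  have key : φ ⁻¹' s ⊆ B (⌈C⌉₊ + 1) := by
    intro x hx
    -- find minimal i with x ∈ B i
    have hex : ∃ i, x ∈ B i := hexh x
    classical
    let i := Nat.find hex
    have hi : x ∈ B i := Nat.find_spec hex
    have hipos : i ≠ 0 := by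
      intro h
      have := hi
      rw [h, hB0] at this
      exact this
    obtain ⟨j, hj⟩ := Nat.exists_eq_succ_of_ne_zero hipos
    have hxj : x ∉ B j := Nat.find_min hex (by omega)
    have hxj1 : x ∈ B (j + 1) := by rw [hj] at hi; exact hi
    have hφx := hφ j x hxj1 hxj
    have h0 : (0:ℝ) ≤ min (Metric.infDist x (B j)) 1 :=
      le_min Metric.infDist_nonneg zero_le_one
    have hjle : (j : ℝ) ≤ φ x := by rw [hφx]; linarith
    have hxs : φ x ∈ Metric.closedBall 0 C := hC hx
    rw [Metric.mem_closedBall, Real.dist_0_eq_abs] at hxs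
    have hjC : (j : ℝ) ≤ C := le_trans hjle (le_trans (le_abs_self _) hxs)
    have hjN : j ≤ ⌈C⌉₊ := by
      exact_mod_cast hjC.trans (Nat.le_ceil C)
    have : B (j + 1) ⊆ B (⌈C⌉₊ + 1) := by
      have : ∀ a b, a ≤ b → B a ⊆ B b := by
        intro a b hab
        induction b with
        | zero => simp_all
        | succ n ih =>
          rcases Nat.lt_or_ge a (n+1) with h | h
          · exact (ih (by omega)).trans (hmono n)
          · have : a = n + 1 := by omega
            subst this; exact subset_rfl
      exact this _ _ (by omega)
    exact this hxj1
  exact ((hcpt _).isBounded).subset key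
end

section
/- Let M be a metric space, and for each i ∈ ℕ let K_i ⊆ M be compact with dist(B_{i-1}, K_i) ≥ 1, where B_i are compact sets as in the balloon construction: B_0 = ∅ and B_{i+1} ⊇ K_{i+1} ∪ B_i with dist(M \ B_{i+1}, B_i) ≥ 1. Then the sets K_i are pairwise disjoint, and any bounded subset of M meets only finitely many of the K_i. -/
/-- In the balloon construction, with `B_0 = ∅`, `B_i` compact increasing with
`dist(M \ B_{i+1}, B_i) ≥ 1`, and compact sets `K_{i+1} ⊆ B_{i+1}` with
`dist(B_i, K_{i+1}) ≥ 1`, the sets `K_i` are pairwise disjoint and any bounded subset of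
`M` meets only finitely many of them. -/
theorem balloon_K_disjoint_locally_finite {M : Type*} [MetricSpace M] [ProperSpace M]
    (B K : ℕ → Set M) (hB0 : B 0 = ∅) (hBcpt : ∀ i, IsCompact (B i))
    (hKcpt : ∀ i, IsCompact (K i)) (hmono : ∀ i, B i ⊆ B (i + 1))
    (hKB : ∀ i, K (i + 1) ⊆ B (i + 1))
    (hKdist : ∀ i, ∀ x ∈ B i, ∀ y ∈ K (i + 1), 1 ≤ dist x y)
    (hBdist : ∀ i, ∀ x ∉ B (i + 1), ∀ y ∈ B i, 1 ≤ dist x y) :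
    (∀ i j : ℕ, i ≠ j → Disjoint (K (i + 1)) (K (j + 1))) ∧
      ∀ s : Set M, Bornology.IsBounded s →
        {i : ℕ | (K (i + 1) ∩ s).Nonempty}.Finite := by
  classical
  have hmono' : ∀ {i j : ℕ}, i ≤ j → B i ⊆ B j := fun {i j} h =>
    monotone_nat_of_le_succ hmono h
  have hsep : ∀ i j : ℕ, i < j → ∀ x ∈ K (i + 1), ∀ y ∈ K (j + 1), 1 ≤ dist x y := by
    intro i j hij x hx y hy
    exact hKdist j x (hmono' hij (hKB i hx)) y hy
  constructor
  · intro i j hij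
    rw [Set.disjoint_left]
    intro x hxi hxj
    rcases hij.lt_or_gt with h | h
    · have := hsep i j h x hxi x hxj
      simp only [dist_self] at this; linarith
    · have := hsep j i h x hxj x hxi
      simp only [dist_self] at this; linarith
  · intro s hs
    by_contra hfin
    have hinf : {i : ℕ | (K (i + 1) ∩ s).Nonempty}.Infinite := hfin
    have hTB : TotallyBounded s := TotallyBounded.subset subset_closure hs.isCompact_closure.totallyBounded
    obtain ⟨t, htfin, hcov⟩ := Metric.totallyBounded_iff.mp hTB (1 / 2) (by norm_num)
    set T := {i : ℕ | (K (i + 1) ∩ s).Nonempty}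
    choose f hf using fun i : T => i.2
    choose g hg hball using fun i : T => Set.mem_iUnion₂.mp (hcov (hf i).2)
    haveI : Infinite T := hinf.to_subtype
    haveI : Finite t := htfin.to_subtype
    obtain ⟨i, j, hne, heq⟩ :=
      Finite.exists_ne_map_eq_of_infinite (fun i : T => (⟨g i, hg i⟩ : t))
    have hij : (i : ℕ) ≠ (j : ℕ) := fun h => hne (Subtype.ext h)
    have hge : 1 ≤ dist (f i) (f j) := by
      rcases hij.lt_or_gt with h | h
      · exact hsep _ _ h _ (hf i).1 _ (hf j).1
      · rw [dist_comm]; exact hsep _ _ h _ (hf j).1 _ (hf i).1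
    have hgij : g i = g j := congrArg Subtype.val heq
    have hlt : dist (f i) (f j) < 1 := by
      calc dist (f i) (f j) ≤ dist (f i) (g i) + dist (g i) (f j) := dist_triangle _ _ _
        _ < 1 / 2 + 1 / 2 := by
            refine add_lt_add ?_ ?_
            · exact hball i
            · rw [hgij, dist_comm]; exact hball j
        _ = 1 := by norm_num
    linarith
end
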